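/- For k ∈ ℤ, let A_k denote the annulus {(z₁,z₂) ∈ ℂ² : 2^{k−1} ≤ (|z₁|² + |z₂|²)^{1/2} < 2^k}. There exists a finite constant C such that for all α > 0, all k, j ∈ ℤ, and all Lebesgue measurable sets E, F ⊂ ℂ², ∫_{ℂ²} ∫_{ℂ²} χ_{{|z₁w₂ − z₂w₁|² ≤ α}}(z,w) · χ_{E ∩ A_k}(z) χ_{F ∩ A_j}(w) dz dw ≤ C α · min{ 2^{2j−2k} |E ∩ A_k|, 2^{2k−2j} |F ∩ A_j| }. -/

import Mathlib

open MeasureTheory Set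
open scoped ENNReal NNReal

lemma two_zpow_enn (n : ℤ) : ENNReal.ofReal ((2:ℝ)^n) = (2:ℝ≥0∞)^n := by
  rw [show ((2:ℝ)) = ((2:ℝ≥0):ℝ) by norm_num, ← NNReal.coe_zpow, ENNReal.ofReal_coe_nnreal,
    ENNReal.coe_zpow (by norm_num)]
  norm_num

lemma detset_meas (z : ℂ × ℂ) (r : ℝ) (R : ℝ) :
    MeasurableSet {w : ℂ × ℂ | ‖z.1 * w.2 - z.2 * w.1‖ ≤ r ∧
      ‖w.1‖ ≤ R ∧ ‖w.2‖ ≤ R} := by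
  apply MeasurableSet.inter
  · exact measurableSet_le (continuous_norm.comp (by fun_prop)).measurable measurable_const
  apply MeasurableSet.inter
  · exact measurableSet_le (continuous_norm.comp continuous_fst).measurable measurable_const
  · exact measurableSet_le (continuous_norm.comp continuous_snd).measurable measurable_const

/-- slice in second variable, assuming z.1 ≠ 0 -/
lemma slice1 (z : ℂ × ℂ) (hz : z.1 ≠ 0) (r R : ℝ) :
    volume {w : ℂ × ℂ | ‖z.1 * w.2 - z.2 * w.1‖ ≤ r ∧
      ‖w.1‖ ≤ R ∧ ‖w.2‖ ≤ R}
    ≤ (ENNReal.ofReal R ^ 2 * NNReal.pi) * (ENNReal.ofReal (r / ‖z.1‖) ^ 2 * NNReal.pi) := by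
  set S := {w : ℂ × ℂ | ‖z.1 * w.2 - z.2 * w.1‖ ≤ r ∧
      ‖w.1‖ ≤ R ∧ ‖w.2‖ ≤ R}
  have hS : MeasurableSet S := detset_meas z r R
  set D : ℝ≥0∞ := ENNReal.ofReal (r / ‖z.1‖) ^ 2 * NNReal.pi
  rw [show (volume : Measure (ℂ × ℂ)) = (volume : Measure ℂ).prod volume from MeasureTheory.Measure.volume_eq_prod ℂ ℂ, Measure.prod_apply hS]
  have hbd : ∀ a : ℂ, volume (Prod.mk a ⁻¹' S) ≤
      (Metric.closedBall (0:ℂ) R).indicator (fun _ => D) a := by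
    intro a
    by_cases ha : a ∈ Metric.closedBall (0:ℂ) R
    · rw [indicator_of_mem ha]
      have : Prod.mk a ⁻¹' S ⊆ Metric.closedBall (z.2 * a / z.1) (r / ‖z.1‖) := by
        intro b hb
        obtain ⟨h1, -, -⟩ := hb
        rw [Metric.mem_closedBall, Complex.dist_eq, le_div_iff₀ (norm_pos_iff.mpr hz)]
        calc ‖b - z.2 * a / z.1‖ * ‖z.1‖
              = ‖(b - z.2 * a / z.1) * z.1‖ := (norm_mul _ _).symm
            _ = ‖z.1 * b - z.2 * a‖ := by
                rw [sub_mul, div_mul_cancel₀ _ hz]; ring_nf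
            _ ≤ r := h1
      calc volume (Prod.mk a ⁻¹' S) ≤ volume (Metric.closedBall (z.2 * a / z.1) (r / ‖z.1‖)) :=
            measure_mono this
        _ = D := Complex.volume_closedBall _ _
    · rw [indicator_of_notMem ha]
      have : Prod.mk a ⁻¹' S = ∅ := by
        ext b
        simp only [mem_preimage, mem_empty_iff_false, iff_false]
        intro hb
        exact ha (by simpa [Metric.mem_closedBall, Complex.dist_eq] using hb.2.1)
      simp [this]
  calc ∫⁻ a, volume (Prod.mk a ⁻¹' S) ≤ ∫⁻ a, (Metric.closedBall (0:ℂ) R).indicator (fun _ => D) a :=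
        lintegral_mono hbd
    _ = D * volume (Metric.closedBall (0:ℂ) R) := by
        rw [lintegral_indicator measurableSet_closedBall]; simp [mul_comm]
    _ = (ENNReal.ofReal R ^ 2 * NNReal.pi) * D := by rw [Complex.volume_closedBall, mul_comm]

/-- slice in first variable, assuming z.2 ≠ 0 -/
lemma slice2 (z : ℂ × ℂ) (hz : z.2 ≠ 0) (r R : ℝ) :
    volume {w : ℂ × ℂ | ‖z.1 * w.2 - z.2 * w.1‖ ≤ r ∧
      ‖w.1‖ ≤ R ∧ ‖w.2‖ ≤ R}
    ≤ (ENNReal.ofReal R ^ 2 * NNReal.pi) * (ENNReal.ofReal (r / ‖z.2‖) ^ 2 * NNReal.pi) := by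
  set S := {w : ℂ × ℂ | ‖z.1 * w.2 - z.2 * w.1‖ ≤ r ∧
      ‖w.1‖ ≤ R ∧ ‖w.2‖ ≤ R}
  have hS : MeasurableSet S := detset_meas z r R
  set D : ℝ≥0∞ := ENNReal.ofReal (r / ‖z.2‖) ^ 2 * NNReal.pi
  rw [show (volume : Measure (ℂ × ℂ)) = (volume : Measure ℂ).prod volume from
    MeasureTheory.Measure.volume_eq_prod ℂ ℂ, Measure.prod_apply_symm hS]
  have hbd : ∀ b : ℂ, volume ((fun a => (a, b)) ⁻¹' S) ≤
      (Metric.closedBall (0:ℂ) R).indicator (fun _ => D) b := by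
    intro b
    by_cases hb : b ∈ Metric.closedBall (0:ℂ) R
    · rw [indicator_of_mem hb]
      have : (fun a => (a, b)) ⁻¹' S ⊆ Metric.closedBall (z.1 * b / z.2) (r / ‖z.2‖) := by
        intro a ha
        obtain ⟨h1, -, -⟩ := ha
        rw [Metric.mem_closedBall, Complex.dist_eq, le_div_iff₀ (norm_pos_iff.mpr hz)]
        calc ‖a - z.1 * b / z.2‖ * ‖z.2‖
              = ‖(a - z.1 * b / z.2) * z.2‖ := (norm_mul _ _).symm
            _ = ‖z.1 * b - z.2 * a‖ := by
                rw [sub_mul, div_mul_cancel₀ _ hz, ← norm_neg]; ring_nf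
            _ ≤ r := h1
      calc volume ((fun a => (a, b)) ⁻¹' S)
            ≤ volume (Metric.closedBall (z.1 * b / z.2) (r / ‖z.2‖)) :=
            measure_mono this
        _ = D := Complex.volume_closedBall _ _
    · rw [indicator_of_notMem hb]
      have : (fun a => (a, b)) ⁻¹' S = ∅ := by
        ext a
        simp only [mem_preimage, mem_empty_iff_false, iff_false]
        intro ha
        exact hb (by simpa [Metric.mem_closedBall, Complex.dist_eq] using ha.2.2)
      simp [this]
  calc ∫⁻ b, volume ((fun a => (a, b)) ⁻¹' S)
        ≤ ∫⁻ b, (Metric.closedBall (0:ℂ) R).indicator (fun _ => D) b := lintegral_mono hbd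
    _ = D * volume (Metric.closedBall (0:ℂ) R) := by
        rw [lintegral_indicator measurableSet_closedBall]; simp [mul_comm]
    _ = (ENNReal.ofReal R ^ 2 * NNReal.pi) * D := by rw [Complex.volume_closedBall, mul_comm]

lemma detvol (z : ℂ × ℂ) (s r R : ℝ) (hs : 0 < s) (hr : 0 ≤ r)
    (hz : s ≤ max (‖z.1‖) (‖z.2‖)) :
    volume {w : ℂ × ℂ | ‖z.1 * w.2 - z.2 * w.1‖ ≤ r ∧
      ‖w.1‖ ≤ R ∧ ‖w.2‖ ≤ R}
    ≤ (ENNReal.ofReal R ^ 2 * NNReal.pi) * (ENNReal.ofReal (r / s) ^ 2 * NNReal.pi) := by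
  rcases le_max_iff.mp hz with h | h
  · have hz1 : z.1 ≠ 0 := by
      intro h0; rw [h0] at h; simp at h; linarith
    refine (slice1 z hz1 r R).trans ?_
    gcongr
  · have hz2 : z.2 ≠ 0 := by
      intro h0; rw [h0] at h; simp at h; linarith
    refine (slice2 z hz2 r R).trans ?_
    gcongr

/-- The complex annulus `{(z₁,z₂) ∈ ℂ² : 2^(k-1) ≤ (|z₁|²+|z₂|²)^{1/2} < 2^k}`. -/
noncomputable def AnnC (k : ℤ) : Set (ℂ × ℂ) :=
  {z | (2 : ℝ) ^ (k - 1) ≤ Real.sqrt (‖z.1‖ ^ 2 + ‖z.2‖ ^ 2) ∧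
       Real.sqrt (‖z.1‖ ^ 2 + ‖z.2‖ ^ 2) < (2 : ℝ) ^ k}

lemma ann_meas (m : ℤ) : MeasurableSet (AnnC m) := by
  have hc : Continuous fun z : ℂ × ℂ => Real.sqrt (‖z.1‖ ^ 2 + ‖z.2‖ ^ 2) :=
    Real.continuous_sqrt.comp (((continuous_norm.comp continuous_fst).pow 2).add
      ((continuous_norm.comp continuous_snd).pow 2))
  rw [AnnC, Set.setOf_and]
  exact (measurableSet_le measurable_const hc.measurable).inter
    (measurableSet_lt hc.measurable measurable_const)

lemma ann_upper {j : ℤ} {w : ℂ × ℂ} (hw : w ∈ AnnC j) :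
    ‖w.1‖ ≤ (2:ℝ)^j ∧ ‖w.2‖ ≤ (2:ℝ)^j := by
  obtain ⟨-, h2⟩ := hw
  have e1 : ‖w.1‖ ≤ Real.sqrt (‖w.1‖ ^ 2 + ‖w.2‖ ^ 2) :=
    calc ‖w.1‖ = Real.sqrt ((‖w.1‖)^2) :=
          (Real.sqrt_sq (norm_nonneg _)).symm
      _ ≤ _ := Real.sqrt_le_sqrt (by nlinarith [norm_nonneg w.2])
  have e2 : ‖w.2‖ ≤ Real.sqrt (‖w.1‖ ^ 2 + ‖w.2‖ ^ 2) :=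
    calc ‖w.2‖ = Real.sqrt ((‖w.2‖)^2) :=
          (Real.sqrt_sq (norm_nonneg _)).symm
      _ ≤ _ := Real.sqrt_le_sqrt (by nlinarith [norm_nonneg w.1])
  exact ⟨by linarith, by linarith⟩

lemma ann_lower {k : ℤ} {z : ℂ × ℂ} (hz : z ∈ AnnC k) :
    (2:ℝ)^(k-2) ≤ max (‖z.1‖) (‖z.2‖) := by
  obtain ⟨h1, -⟩ := hz
  set a := ‖z.1‖ with ha'
  set b := ‖z.2‖ with hb'
  have ha : 0 ≤ a := norm_nonneg _
  have hb : 0 ≤ b := norm_nonneg _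
  set m := max a b with hm'
  have hm : 0 ≤ m := le_trans ha (le_max_left _ _)
  have ham : a ≤ m := le_max_left _ _
  have hbm : b ≤ m := le_max_right _ _
  have hsq : a^2 + b^2 ≤ (2*m)^2 := by nlinarith
  have h2 : Real.sqrt (a^2 + b^2) ≤ 2*m := by
    rw [show (2*m : ℝ) = Real.sqrt ((2*m)^2) from (Real.sqrt_sq (by linarith)).symm]
    exact Real.sqrt_le_sqrt hsq
  have h3 : (2:ℝ)^(k-1) = 2 * 2^(k-2) := by
    rw [show k - 1 = 1 + (k-2) by ring, zpow_add₀ (two_ne_zero : (2:ℝ) ≠ 0), zpow_one]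
  linarith

lemma bound_eq (α : ℝ) (hα : 0 < α) (k j : ℤ) :
    (ENNReal.ofReal ((2:ℝ)^j) ^ 2 * NNReal.pi) *
      (ENNReal.ofReal (Real.sqrt α / (2:ℝ)^(k-2)) ^ 2 * NNReal.pi)
    = ENNReal.ofReal (16 * Real.pi^2 * α) * (2:ℝ≥0∞)^(2*j-2*k) := by
  have hπ : (NNReal.pi : ℝ≥0∞) = ENNReal.ofReal Real.pi := by
    rw [← NNReal.coe_real_pi, ENNReal.ofReal_coe_nnreal]
  rw [hπ, ← ENNReal.ofReal_pow (by positivity), ← ENNReal.ofReal_pow (by positivity),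
    ← ENNReal.ofReal_mul (by positivity), ← ENNReal.ofReal_mul (by positivity),
    ← ENNReal.ofReal_mul (by positivity), ← two_zpow_enn, ← ENNReal.ofReal_mul (by positivity)]
  congr 1
  rw [div_pow, Real.sq_sqrt hα.le]
  have e1 : ((2:ℝ)^j)^2 = 2^(2*j) := by
    rw [sq, show 2*j = j + j by ring, zpow_add₀ (two_ne_zero : (2:ℝ) ≠ 0)]
  have e2 : ((2:ℝ)^(k-2))^2 = 2^(2*k-4) := by
    rw [sq, show 2*k-4 = (k-2) + (k-2) by ring, zpow_add₀ (two_ne_zero : (2:ℝ) ≠ 0)]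
  have e3 : (2:ℝ)^(2*j) / 2^(2*k-4) = 16 * 2^(2*j-2*k) := by
    rw [← zpow_sub₀ (two_ne_zero : (2:ℝ) ≠ 0), show 2*j - (2*k-4) = 4 + (2*j-2*k) by ring,
      zpow_add₀ (two_ne_zero : (2:ℝ) ≠ 0)]
    norm_num
  calc ((2:ℝ)^j)^2 * Real.pi * (α / ((2:ℝ)^(k-2))^2 * Real.pi)
      = Real.pi^2 * α * ((2:ℝ)^(2*j) / 2^(2*k-4)) := by rw [e1, e2]; ring
    _ = 16 * Real.pi^2 * α * 2^(2*j-2*k) := by rw [e3]; ring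

lemma onebound (α : ℝ) (hα : 0 < α) (k j : ℤ) (z : ℂ × ℂ) (hz : z ∈ AnnC k) :
    volume {w : ℂ × ℂ | ‖z.1 * w.2 - z.2 * w.1‖ ≤ Real.sqrt α ∧
      ‖w.1‖ ≤ (2:ℝ)^j ∧ ‖w.2‖ ≤ (2:ℝ)^j}
    ≤ ENNReal.ofReal (16 * Real.pi^2 * α) * (2:ℝ≥0∞)^(2*j-2*k) := by
  refine le_trans (detvol z ((2:ℝ)^(k-2)) (Real.sqrt α) ((2:ℝ)^j)
    (by positivity) (Real.sqrt_nonneg _) (ann_lower hz)) ?_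
  exact le_of_eq (bound_eq α hα k j)

/-- annulus-localized complex determinant sublevel set bound in `ℂ²`. -/
theorem statement18 :
    ∃ C : ℝ, 0 ≤ C ∧ ∀ α : ℝ, 0 < α → ∀ k j : ℤ,
      ∀ E F : Set (ℂ × ℂ), MeasurableSet E → MeasurableSet F →
      (∫⁻ z, ∫⁻ w,
          ({q : (ℂ × ℂ) × (ℂ × ℂ) |
              ‖q.1.1 * q.2.2 - q.1.2 * q.2.1‖ ^ 2 ≤ α}.indicator
                (fun _ => (1 : ℝ≥0∞)) (z, w))
            * (E ∩ AnnC k).indicator (fun _ => (1 : ℝ≥0∞)) z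
            * (F ∩ AnnC j).indicator (fun _ => (1 : ℝ≥0∞)) w)
        ≤ ENNReal.ofReal (C * α) *
            min ((2 : ℝ≥0∞) ^ (2 * j - 2 * k) * volume (E ∩ AnnC k))
                ((2 : ℝ≥0∞) ^ (2 * k - 2 * j) * volume (F ∩ AnnC j)) := by
  refine ⟨16 * Real.pi ^ 2, by positivity, ?_⟩
  intro α hα k j E F hE hF
  set G : Set ((ℂ × ℂ) × (ℂ × ℂ)) :=
    {q | ‖q.1.1 * q.2.2 - q.1.2 * q.2.1‖ ^ 2 ≤ α} with hG'
  have hG : MeasurableSet G := by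
    refine measurableSet_le ?_ measurable_const
    exact ((continuous_norm.comp (by fun_prop)).pow 2).measurable
  have hEk : MeasurableSet (E ∩ AnnC k) := hE.inter (ann_meas k)
  have hFj : MeasurableSet (F ∩ AnnC j) := hF.inter (ann_meas j)
  have hsq : ∀ x : ℂ, ‖x‖ ^ 2 ≤ α → ‖x‖ ≤ Real.sqrt α := by
    intro x hx
    rw [show ‖x‖ = Real.sqrt ((‖x‖)^2) from
      (Real.sqrt_sq (norm_nonneg _)).symm]
    exact Real.sqrt_le_sqrt hx
  set B1 : ℝ≥0∞ := ENNReal.ofReal (16 * Real.pi^2 * α) * (2:ℝ≥0∞)^(2*j-2*k) with hB1'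
  set B2 : ℝ≥0∞ := ENNReal.ofReal (16 * Real.pi^2 * α) * (2:ℝ≥0∞)^(2*k-2*j) with hB2'
  -- pointwise: indicators ≤ 1
  have ind_le_one : ∀ (S : Set (ℂ × ℂ)) (x : ℂ × ℂ),
      S.indicator (fun _ => (1:ℝ≥0∞)) x ≤ 1 := by
    intro S x
    by_cases h : x ∈ S <;> simp [h]
  have indG_le_one : ∀ (x : (ℂ × ℂ) × (ℂ × ℂ)),
      G.indicator (fun _ => (1:ℝ≥0∞)) x ≤ 1 := by
    intro x
    by_cases h : x ∈ G <;> simp [h]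
  -- bound 1
  have key1 : ∀ z : ℂ × ℂ,
      (∫⁻ w, G.indicator (fun _ => (1:ℝ≥0∞)) (z, w)
        * (E ∩ AnnC k).indicator (fun _ => (1:ℝ≥0∞)) z
        * (F ∩ AnnC j).indicator (fun _ => (1:ℝ≥0∞)) w)
      ≤ (E ∩ AnnC k).indicator (fun _ => B1) z := by
    intro z
    by_cases hz : z ∈ E ∩ AnnC k
    · rw [show (E ∩ AnnC k).indicator (fun _ => B1) z = B1 from indicator_of_mem hz _]
      set U : Set (ℂ × ℂ) := {w | ‖z.1 * w.2 - z.2 * w.1‖ ≤ Real.sqrt α ∧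
        ‖w.1‖ ≤ (2:ℝ)^j ∧ ‖w.2‖ ≤ (2:ℝ)^j} with hU'
      have hpt : ∀ w, G.indicator (fun _ => (1:ℝ≥0∞)) (z, w)
          * (E ∩ AnnC k).indicator (fun _ => (1:ℝ≥0∞)) z
          * (F ∩ AnnC j).indicator (fun _ => (1:ℝ≥0∞)) w
          ≤ U.indicator (fun _ => (1:ℝ≥0∞)) w := by
        intro w
        by_cases hw : w ∈ U
        · rw [indicator_of_mem hw]
          exact mul_le_one' (mul_le_one' (indG_le_one _) (ind_le_one _ _)) (ind_le_one _ _)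
        · rw [indicator_of_notMem hw]
          by_cases h1 : (z, w) ∈ G
          · by_cases h3 : w ∈ F ∩ AnnC j
            · exfalso
              apply hw
              refine ⟨hsq _ h1, (ann_upper h3.2).1, (ann_upper h3.2).2⟩
            · rw [indicator_of_notMem h3, mul_zero]
          · rw [indicator_of_notMem h1, zero_mul, zero_mul]
      calc _ ≤ ∫⁻ w, U.indicator (fun _ => (1:ℝ≥0∞)) w := lintegral_mono hpt
        _ = volume U := by
            rw [lintegral_indicator (detset_meas z _ _)]
            simp [hU']
        _ ≤ B1 := onebound α hα k j z hz.2
    · have h0 : ∀ w : ℂ × ℂ, G.indicator (fun _ => (1:ℝ≥0∞)) (z, w)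
          * (E ∩ AnnC k).indicator (fun _ => (1:ℝ≥0∞)) z
          * (F ∩ AnnC j).indicator (fun _ => (1:ℝ≥0∞)) w = 0 := by
        intro w
        rw [indicator_of_notMem hz, mul_zero, zero_mul]
      calc _ = (0:ℝ≥0∞) := by rw [lintegral_congr h0, lintegral_zero]
        _ ≤ _ := bot_le
  have total1 : (∫⁻ z, ∫⁻ w, G.indicator (fun _ => (1:ℝ≥0∞)) (z, w)
        * (E ∩ AnnC k).indicator (fun _ => (1:ℝ≥0∞)) z
        * (F ∩ AnnC j).indicator (fun _ => (1:ℝ≥0∞)) w)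
      ≤ B1 * volume (E ∩ AnnC k) := by
    calc _ ≤ ∫⁻ z, (E ∩ AnnC k).indicator (fun _ => B1) z := lintegral_mono key1
      _ = B1 * volume (E ∩ AnnC k) := by
          rw [lintegral_indicator hEk]
          simp [mul_comm]
  -- swap
  have hmeas : Measurable fun p : (ℂ × ℂ) × (ℂ × ℂ) =>
      G.indicator (fun _ => (1:ℝ≥0∞)) p
        * (E ∩ AnnC k).indicator (fun _ => (1:ℝ≥0∞)) p.1
        * (F ∩ AnnC j).indicator (fun _ => (1:ℝ≥0∞)) p.2 :=
    ((measurable_const.indicator hG).mul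
      ((measurable_const.indicator hEk).comp measurable_fst)).mul
      ((measurable_const.indicator hFj).comp measurable_snd)
  have hswap : (∫⁻ z, ∫⁻ w, G.indicator (fun _ => (1:ℝ≥0∞)) (z, w)
        * (E ∩ AnnC k).indicator (fun _ => (1:ℝ≥0∞)) z
        * (F ∩ AnnC j).indicator (fun _ => (1:ℝ≥0∞)) w)
      = ∫⁻ w, ∫⁻ z, G.indicator (fun _ => (1:ℝ≥0∞)) (z, w)
        * (E ∩ AnnC k).indicator (fun _ => (1:ℝ≥0∞)) z
        * (F ∩ AnnC j).indicator (fun _ => (1:ℝ≥0∞)) w :=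
    lintegral_lintegral_swap hmeas.aemeasurable
  have key2 : ∀ w : ℂ × ℂ,
      (∫⁻ z, G.indicator (fun _ => (1:ℝ≥0∞)) (z, w)
        * (E ∩ AnnC k).indicator (fun _ => (1:ℝ≥0∞)) z
        * (F ∩ AnnC j).indicator (fun _ => (1:ℝ≥0∞)) w)
      ≤ (F ∩ AnnC j).indicator (fun _ => B2) w := by
    intro w
    by_cases hw : w ∈ F ∩ AnnC j
    · rw [show (F ∩ AnnC j).indicator (fun _ => B2) w = B2 from indicator_of_mem hw _]
      set U : Set (ℂ × ℂ) := {z | ‖w.1 * z.2 - w.2 * z.1‖ ≤ Real.sqrt α ∧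
        ‖z.1‖ ≤ (2:ℝ)^k ∧ ‖z.2‖ ≤ (2:ℝ)^k} with hU'
      have habs : ∀ z : ℂ × ℂ, ‖w.1 * z.2 - w.2 * z.1‖
          = ‖z.1 * w.2 - z.2 * w.1‖ := by
        intro z
        rw [← norm_neg]
        ring_nf
      have hpt : ∀ z, G.indicator (fun _ => (1:ℝ≥0∞)) (z, w)
          * (E ∩ AnnC k).indicator (fun _ => (1:ℝ≥0∞)) z
          * (F ∩ AnnC j).indicator (fun _ => (1:ℝ≥0∞)) w
          ≤ U.indicator (fun _ => (1:ℝ≥0∞)) z := by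
        intro z
        by_cases hzU : z ∈ U
        · rw [indicator_of_mem hzU]
          exact mul_le_one' (mul_le_one' (indG_le_one _) (ind_le_one _ _)) (ind_le_one _ _)
        · rw [indicator_of_notMem hzU]
          by_cases h1 : (z, w) ∈ G
          · by_cases h2 : z ∈ E ∩ AnnC k
            · exfalso
              apply hzU
              refine ⟨?_, (ann_upper h2.2).1, (ann_upper h2.2).2⟩
              rw [habs z]
              exact hsq _ h1
            · rw [indicator_of_notMem h2, mul_zero, zero_mul]
          · rw [indicator_of_notMem h1, zero_mul, zero_mul]
      calc _ ≤ ∫⁻ z, U.indicator (fun _ => (1:ℝ≥0∞)) z := lintegral_mono hpt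
        _ = volume U := by
            rw [lintegral_indicator (detset_meas w _ _)]
            simp [hU']
        _ ≤ B2 := onebound α hα j k w hw.2
    · have h0 : ∀ z : ℂ × ℂ, G.indicator (fun _ => (1:ℝ≥0∞)) (z, w)
          * (E ∩ AnnC k).indicator (fun _ => (1:ℝ≥0∞)) z
          * (F ∩ AnnC j).indicator (fun _ => (1:ℝ≥0∞)) w = 0 := by
        intro z
        rw [indicator_of_notMem hw, mul_zero]
      calc _ = (0:ℝ≥0∞) := by rw [lintegral_congr h0, lintegral_zero]
        _ ≤ _ := bot_le
  have total2 : (∫⁻ z, ∫⁻ w, G.indicator (fun _ => (1:ℝ≥0∞)) (z, w)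
        * (E ∩ AnnC k).indicator (fun _ => (1:ℝ≥0∞)) z
        * (F ∩ AnnC j).indicator (fun _ => (1:ℝ≥0∞)) w)
      ≤ B2 * volume (F ∩ AnnC j) := by
    rw [hswap]
    calc _ ≤ ∫⁻ w, (F ∩ AnnC j).indicator (fun _ => B2) w := lintegral_mono key2
      _ = B2 * volume (F ∩ AnnC j) := by
          rw [lintegral_indicator hFj]
          simp [mul_comm]
  rcases le_total ((2:ℝ≥0∞)^(2*j-2*k) * volume (E ∩ AnnC k))
      ((2:ℝ≥0∞)^(2*k-2*j) * volume (F ∩ AnnC j)) with h | h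
  · rw [min_eq_left h, ← mul_assoc]
    exact total1
  · rw [min_eq_right h, ← mul_assoc]
    exact total2
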